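/- arXiv:2312.12303 — 3 statements merged into one kernel-verified Lean document; each statement's English description precedes it below -/
import Mathlib

section
/- Let o_1, o_2, … be i.i.d. real random variables with CDF F. For each i let K_{o_i} be a probability measure on ℝ with continuous CDF F_{K_{o_i}}, let X_i be distributed according to K_{o_i}, let Y_i = |X_i − o_i|, and let C_i(ε) = P(Y_i ≥ ε). If for every ε > 0 we have (1/n)·∑_{i=1}^n C_i(ε) → 0 as n → ∞, then almost surely the averaged CDFs H_n(x) = (1/n)·∑_{i=1}^n F_{K_{o_i}}(x) converge to F(x) at every continuity point x of F. -/
/-! By the strong law of large numbers, almost surely the empirical CDF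
`Fₙ(q) = (1/n) ∑ 1{oᵢ ≤ q}` converges to `F(q)` at every rational `q` simultaneously.
Pointwise, `K_{oᵢ}(Iic x)` differs from `1{oᵢ ≤ q}` by at most the far mass
`K_{oᵢ}{y | |x - q| ≤ |y - oᵢ|}`, so for rationals `q < x < q'` averaging gives
`Fₙ(q) - Cₙ(x - q) ≤ Hₙ(x) ≤ Fₙ(q') + Cₙ(q' - x)`. Letting `n → ∞` and then `q, q' → x`,
continuity of `F` at `x` squeezes `Hₙ(x)` to `F(x)`. -/

open MeasureTheory Filter Topology ProbabilityTheory Set Function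

section KernelBounds

variable (κ : Measure ℝ) [IsProbabilityMeasure κ] {r q x ε : ℝ}

theorem indicator_Iic_le_measureReal_Iic_add (hqx : q + ε ≤ x) :
    (Iic q).indicator 1 r ≤ κ.real (Iic x) + κ.real {y | ε ≤ |y - r|} := by
  by_cases hr : r ≤ q
  · have hfar : Ioi x ⊆ {y | ε ≤ |y - r|} := fun y (hy : x < y) =>
      (show ε ≤ y - r by linarith).trans (le_abs_self _)
    calc (Iic q).indicator 1 r = κ.real (Iic x) + κ.real (Ioi x) := by
          rw [indicator_of_mem (mem_Iic.2 hr), ← compl_Iic,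
            probReal_add_probReal_compl measurableSet_Iic, Pi.one_apply]
      _ ≤ κ.real (Iic x) + κ.real {y | ε ≤ |y - r|} := by grw [measureReal_mono hfar]
  · rw [indicator_of_notMem (by simpa using hr)]
    positivity

theorem measureReal_Iic_le_indicator_Iic_add (hxq : x + ε ≤ q) :
    κ.real (Iic x) ≤ (Iic q).indicator 1 r + κ.real {y | ε ≤ |y - r|} := by
  by_cases hr : r ≤ q
  · rw [indicator_of_mem (mem_Iic.2 hr), Pi.one_apply]
    linarith [measureReal_le_one (μ := κ) (s := Iic x),
      measureReal_nonneg (μ := κ) (s := {y | ε ≤ |y - r|})]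
  · have hfar : Iic x ⊆ {y | ε ≤ |y - r|} := fun y (hy : y ≤ x) => by
      show ε ≤ |y - r|
      rw [abs_sub_comm]
      exact (show ε ≤ r - y by linarith).trans (le_abs_self _)
    rw [indicator_of_notMem (by simpa using hr), zero_add]
    exact measureReal_mono hfar

end KernelBounds

theorem ae_tendsto_average_indicator {Ω E : Type*} [MeasurableSpace Ω] [MeasurableSpace E]
    {μ : Measure Ω} [IsFiniteMeasure μ] {X : ℕ → Ω → E} {Y : Ω → E} (hY : Measurable Y)
    (hindep : Pairwise ((IndepFun · · μ) on X)) (hident : ∀ i, IdentDistrib (X i) Y μ μ)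
    {s : Set E} (hs : MeasurableSet s) :
    ∀ᵐ ω ∂μ, Tendsto (fun n : ℕ => (∑ i ∈ Finset.range n, s.indicator (1 : E → ℝ) (X i ω)) / n)
      atTop (𝓝 (μ.real (Y ⁻¹' s))) := by
  have hf : Measurable (s.indicator (1 : E → ℝ)) := measurable_one.indicator hs
  have hmean : μ[fun ω => s.indicator 1 (X 0 ω)] = μ.real (Y ⁻¹' s) :=
    ((hident 0).comp hf).integral_eq.trans (integral_indicator_one (hY hs))
  have hint : Integrable (fun ω => s.indicator (1 : E → ℝ) (X 0 ω)) μ :=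
    ((hident 0).comp hf).integrable_iff.2 ((integrable_const 1).indicator (hY hs))
  rw [← hmean]
  exact strong_law_ae_real (fun i ω => s.indicator 1 (X i ω)) hint
    (fun i j hij => (hindep hij).comp hf hf)
    (fun i => ((hident i).trans (hident 0).symm).comp hf)

theorem exists_rat_lt_of_eventually_nhds {p : ℝ → Prop} {x : ℝ} (h : ∀ᶠ y in 𝓝 x, p y) :
    ∃ q : ℚ, (q : ℝ) < x ∧ p q := by
  obtain ⟨l, u, ⟨hl, hu⟩, hsub⟩ := mem_nhds_iff_exists_Ioo_subset.1 h
  obtain ⟨q, hlq, hqx⟩ := exists_rat_btwn hl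
  exact ⟨q, hqx, hsub ⟨hlq, hqx.trans hu⟩⟩

theorem exists_rat_gt_of_eventually_nhds {p : ℝ → Prop} {x : ℝ} (h : ∀ᶠ y in 𝓝 x, p y) :
    ∃ q : ℚ, x < q ∧ p q := by
  obtain ⟨l, u, ⟨hl, hu⟩, hsub⟩ := mem_nhds_iff_exists_Ioo_subset.1 h
  obtain ⟨q, hxq, hqu⟩ := exists_rat_btwn hu
  exact ⟨q, hxq, hsub ⟨hl.trans hxq, hqu⟩⟩

theorem tendsto_of_rat_sandwich {F : ℝ → ℝ} {x : ℝ} (hx : ContinuousAt F x)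
    {G : ℕ → ℚ → ℝ} {C : ℕ → ℝ → ℝ} {H : ℕ → ℝ}
    (hG : ∀ q : ℚ, Tendsto (fun n => G n q) atTop (𝓝 (F q)))
    (hC : ∀ ε, 0 < ε → Tendsto (fun n => C n ε) atTop (𝓝 0))
    (hlow : ∀ n, ∀ q : ℚ, (q : ℝ) < x → G n q - C n (x - q) ≤ H n)
    (hup : ∀ n, ∀ q : ℚ, x < q → H n ≤ G n q + C n (q - x)) :
    Tendsto H atTop (𝓝 (F x)) := by
  refine tendsto_order.2 ⟨fun a ha => ?_, fun b hb => ?_⟩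
  · obtain ⟨q, hqx, hq⟩ := exists_rat_lt_of_eventually_nhds (hx.eventually (lt_mem_nhds ha))
    have hlim := (hG q).sub (hC _ (sub_pos.2 hqx))
    rw [sub_zero] at hlim
    filter_upwards [hlim.eventually (lt_mem_nhds hq)] with n hn
    exact hn.trans_le (hlow n q hqx)
  · obtain ⟨q, hxq, hq⟩ := exists_rat_gt_of_eventually_nhds (hx.eventually (gt_mem_nhds hb))
    have hlim := (hG q).add (hC _ (sub_pos.2 hxq))
    rw [add_zero] at hlim
    filter_upwards [hlim.eventually (gt_mem_nhds hq)] with n hn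
    exact (hup n q hxq).trans_lt hn

theorem stmt_2_general {Ω : Type*} [MeasurableSpace Ω] (μ : Measure Ω) [IsProbabilityMeasure μ]
    (o : ℕ → Ω → ℝ) (homeas : ∀ i, Measurable (o i))
    (hindep : iIndepFun o μ)
    (hident : ∀ i, IdentDistrib (o i) (o 0) μ μ)
    (F : ℝ → ℝ) (hF : ∀ x, F x = (μ {ω | o 0 ω ≤ x}).toReal)
    (K : ℕ → ℝ → Measure ℝ) (hKprob : ∀ i r, IsProbabilityMeasure (K i r))
    (hC : ∀ ε : ℝ, 0 < ε → ∀ ω : Ω,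
      Tendsto (fun n : ℕ =>
          (1 / (n : ℝ)) * ∑ i ∈ Finset.range n,
            ((K (i + 1) (o (i + 1) ω)) {y : ℝ | ε ≤ |y - o (i + 1) ω|}).toReal)
        atTop (𝓝 0)) :
    ∀ᵐ ω ∂μ, ∀ x : ℝ, ContinuousAt F x →
      Tendsto (fun n : ℕ =>
          (1 / (n : ℝ)) * ∑ i ∈ Finset.range n,
            ((K (i + 1) (o (i + 1) ω)) (Set.Iic x)).toReal)
        atTop (𝓝 (F x)) := by
  have hempirical : ∀ᵐ ω ∂μ, ∀ q : ℚ, Tendsto (fun n : ℕ =>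
      1 / (n : ℝ) * ∑ i ∈ Finset.range n, (Iic (q : ℝ)).indicator 1 (o (i + 1) ω))
      atTop (𝓝 (F q)) := by
    refine ae_all_iff.2 fun q => ?_
    have := ae_tendsto_average_indicator (homeas 0)
      (fun i j hij => hindep.indepFun (by omega : i + 1 ≠ j + 1)) (fun i => hident (i + 1))
      (measurableSet_Iic (a := (q : ℝ)))
    simp only [one_div_mul_eq_div, hF]
    exact this
  filter_upwards [hempirical] with ω hω x hx
  refine tendsto_of_rat_sandwich hx hω (hC · · ω) (fun n q hqx => ?_) (fun n q hxq => ?_)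
  · rw [← mul_sub, ← Finset.sum_sub_distrib]
    gcongr with i
    have := hKprob (i + 1) (o (i + 1) ω)
    exact sub_le_iff_le_add.2 (indicator_Iic_le_measureReal_Iic_add _ (by linarith))
  · rw [← mul_add, ← Finset.sum_add_distrib]
    gcongr with i
    have := hKprob (i + 1) (o (i + 1) ω)
    exact measureReal_Iic_le_indicator_Iic_add _ (by linarith)

/-- if the Cesàro averages of the kernel concentrations
C_i(ε) = K_{o_i}({y : |y − o_i| ≥ ε}) tend to 0 for every ε > 0, then almost surely
the averaged kernel CDFs H_n converge to F at every continuity point of F. -/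
theorem stmt_2 {Ω : Type*} [MeasurableSpace Ω] (μ : Measure Ω) [IsProbabilityMeasure μ]
    (o : ℕ → Ω → ℝ) (homeas : ∀ i, Measurable (o i))
    (hindep : iIndepFun o μ)
    (hident : ∀ i, IdentDistrib (o i) (o 0) μ μ)
    (F : ℝ → ℝ) (hF : ∀ x, F x = (μ {ω | o 0 ω ≤ x}).toReal)
    (K : ℕ → ℝ → Measure ℝ) (hKprob : ∀ i r, IsProbabilityMeasure (K i r))
    (hKcont : ∀ i r, Continuous (fun x => ((K i r) (Set.Iic x)).toReal))
    (hC : ∀ ε : ℝ, 0 < ε → ∀ ω : Ω,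
      Tendsto (fun n : ℕ =>
          (1 / (n : ℝ)) * ∑ i ∈ Finset.range n,
            ((K (i + 1) (o (i + 1) ω)) {y : ℝ | ε ≤ |y - o (i + 1) ω|}).toReal)
        atTop (𝓝 0)) :
    ∀ᵐ ω ∂μ, ∀ x : ℝ, ContinuousAt F x →
      Tendsto (fun n : ℕ =>
          (1 / (n : ℝ)) * ∑ i ∈ Finset.range n,
            ((K (i + 1) (o (i + 1) ω)) (Set.Iic x)).toReal)
        atTop (𝓝 (F x)) :=
  stmt_2_general μ o homeas hindep hident F hF K hKprob hC
end

section
/- Let o_1, o_2, … be i.i.d. real random variables with CDF F. Suppose each kernel K_{o_i} is a probability measure with continuous CDF supported in the interval [o_i − δ_i, o_i + δ_i], where δ_i > 0 and δ_i → 0 as i → ∞. Then almost surely the averaged kernel CDFs H_n(x) = (1/n)·∑_{i=1}^n F_{K_{o_i}}(x) converge to F(x) at every continuity point of F. -/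
/-!
Since `K_{o_i}` lives on `[o_i - δ_i, o_i + δ_i]` and `δ_i → 0`, for rationals `q < x < q'` the
kernel CDF at `x` is eventually squeezed between `1{o_i ≤ q}` and `1{o_i ≤ q'}`. Finitely many
exceptional indices do not affect Cesàro means, so `H_n(x)` is asymptotically squeezed between the
empirical CDFs at `q` and `q'`. By the strong law these converge, simultaneously for all rationals
and almost surely, to `F q` and `F q'`, which are close to `F x` by continuity of `F` at `x`.
-/

open MeasureTheory Filter Topology ProbabilityTheory Set

noncomputable def cesaroMean (u : ℕ → ℝ) (n : ℕ) : ℝ := (n : ℝ)⁻¹ * ∑ i ∈ Finset.range n, u i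

lemma cesaroMean_mono {u v : ℕ → ℝ} (huv : ∀ i, u i ≤ v i) (n : ℕ) :
    cesaroMean u n ≤ cesaroMean v n :=
  mul_le_mul_of_nonneg_left (Finset.sum_le_sum fun i _ => huv i) (by positivity)

lemma cesaroMean_add (u v : ℕ → ℝ) (n : ℕ) :
    cesaroMean (fun i => u i + v i) n = cesaroMean u n + cesaroMean v n := by
  simp only [cesaroMean, Finset.sum_add_distrib, mul_add]

lemma cesaroMean_neg (u : ℕ → ℝ) (n : ℕ) : cesaroMean (fun i => -u i) n = -cesaroMean u n := by
  simp only [cesaroMean, Finset.sum_neg_distrib, mul_neg]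

lemma eventually_lt_cesaroMean {u v : ℕ → ℝ} {A a : ℝ} (huv : ∀ᶠ i in atTop, u i ≤ v i)
    (hu : Tendsto (cesaroMean u) atTop (𝓝 A)) (ha : a < A) :
    ∀ᶠ n in atTop, a < cesaroMean v n := by
  -- `v ≥ u + w` everywhere, where the correction `w` vanishes eventually
  set w : ℕ → ℝ := fun i => min (v i - u i) 0
  have hw : Tendsto w atTop (𝓝 0) :=
    tendsto_const_nhds.congr' (huv.mono fun i h => (min_eq_right (sub_nonneg.2 h)).symm)
  have hsum : Tendsto (fun n => cesaroMean u n + cesaroMean w n) atTop (𝓝 (A + 0)) :=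
    hu.add hw.cesaro
  filter_upwards [hsum.eventually (lt_mem_nhds (by simpa using ha))] with n hn
  calc a < cesaroMean u n + cesaroMean w n := hn
    _ = cesaroMean (fun i => u i + w i) n := (cesaroMean_add u w n).symm
    _ ≤ cesaroMean v n := cesaroMean_mono (fun i => by linarith [min_le_left (v i - u i) 0]) n

lemma eventually_cesaroMean_lt {u v : ℕ → ℝ} {B b : ℝ} (hvu : ∀ᶠ i in atTop, v i ≤ u i)
    (hu : Tendsto (cesaroMean u) atTop (𝓝 B)) (hb : B < b) :
    ∀ᶠ n in atTop, cesaroMean v n < b := by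
  have hneg : Tendsto (cesaroMean fun i => -u i) atTop (𝓝 (-B)) := by
    rw [show cesaroMean (fun i => -u i) = _ from funext (cesaroMean_neg u)]
    exact hu.neg
  filter_upwards [eventually_lt_cesaroMean (hvu.mono fun i h => neg_le_neg h) hneg
    (neg_lt_neg hb)] with n hn
  rw [cesaroMean_neg] at hn
  exact neg_lt_neg_iff.1 hn

lemma exists_rat_lt_of_eventually {P : ℝ → Prop} {x : ℝ} (h : ∀ᶠ t in 𝓝 x, P t) :
    ∃ q : ℚ, (q : ℝ) < x ∧ P q := by
  obtain ⟨l, hlx, hl⟩ := exists_Ioc_subset_of_mem_nhds h ⟨x - 1, by linarith⟩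
  obtain ⟨q, hlq, hqx⟩ := exists_rat_btwn hlx
  exact ⟨q, hqx, hl ⟨hlq, hqx.le⟩⟩

lemma exists_rat_gt_of_eventually {P : ℝ → Prop} {x : ℝ} (h : ∀ᶠ t in 𝓝 x, P t) :
    ∃ q : ℚ, x < (q : ℝ) ∧ P q := by
  obtain ⟨u, hxu, hu⟩ := exists_Ico_subset_of_mem_nhds h ⟨x + 1, by linarith⟩
  obtain ⟨q, hxq, hqu⟩ := exists_rat_btwn hxu
  exact ⟨q, hxq, hu ⟨hxq.le, hqu⟩⟩

section Concentrated

variable {ν : Measure ℝ} [IsProbabilityMeasure ν] {r d : ℝ}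

lemma indicator_Iic_le_measureReal_Iic (hν : ν (Icc (r - d) (r + d)) = 1) {q x : ℝ}
    (hqx : q + d ≤ x) : (Iic q).indicator 1 r ≤ ν.real (Iic x) := by
  by_cases hrq : r ≤ q
  · have hsub : Icc (r - d) (r + d) ⊆ Iic x := fun y hy => by
      simp only [mem_Iic]
      linarith [hy.2]
    calc (Iic q).indicator 1 r = ν.real (Icc (r - d) (r + d)) := by
          simp [indicator_of_mem (mem_Iic.2 hrq), measureReal_def, hν]
      _ ≤ ν.real (Iic x) := measureReal_mono hsub
  · simp [indicator_of_notMem (mt mem_Iic.1 hrq), measureReal_nonneg]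

lemma measureReal_Iic_le_indicator_Iic (hν : ν (Icc (r - d) (r + d)) = 1) {q x : ℝ}
    (hxq : x + d < q) : ν.real (Iic x) ≤ (Iic q).indicator 1 r := by
  by_cases hrq : r ≤ q
  · simp [indicator_of_mem (mem_Iic.2 hrq), measureReal_le_one]
  · have hsub : Iic x ⊆ (Icc (r - d) (r + d))ᶜ := fun y hy hy' => by
      simp only [mem_Iic] at hy
      linarith [hy'.1]
    have hnull : ν (Iic x) = 0 :=
      measure_mono_null hsub ((prob_compl_eq_zero_iff measurableSet_Icc).2 hν)
    simp [indicator_of_notMem (mt mem_Iic.1 hrq), measureReal_def, hnull]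

end Concentrated

theorem tendsto_cesaroMean_measureReal_Iic {G : ℝ → ℝ} {x : ℝ} (hG : ContinuousAt G x)
    {y d : ℕ → ℝ} {ν : ℕ → Measure ℝ} [∀ i, IsProbabilityMeasure (ν i)]
    (hd : Tendsto d atTop (𝓝 0)) (hν : ∀ i, ν i (Icc (y i - d i) (y i + d i)) = 1)
    (hemp : ∀ q : ℚ,
      Tendsto (cesaroMean fun i => (Iic (q : ℝ)).indicator 1 (y i)) atTop (𝓝 (G q))) :
    Tendsto (cesaroMean fun i => (ν i).real (Iic x)) atTop (𝓝 (G x)) := by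
  refine tendsto_order.2 ⟨fun a ha => ?_, fun b hb => ?_⟩
  · obtain ⟨q, hqx, hq⟩ := exists_rat_lt_of_eventually (hG.eventually (lt_mem_nhds ha))
    refine eventually_lt_cesaroMean ?_ (hemp q) hq
    filter_upwards [hd.eventually (gt_mem_nhds (sub_pos.2 hqx))] with i hi
    exact indicator_Iic_le_measureReal_Iic (hν i) (by linarith)
  · obtain ⟨q, hxq, hq⟩ := exists_rat_gt_of_eventually (hG.eventually (gt_mem_nhds hb))
    refine eventually_cesaroMean_lt ?_ (hemp q) hq
    filter_upwards [hd.eventually (gt_mem_nhds (sub_pos.2 hxq))] with i hi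
    exact measureReal_Iic_le_indicator_Iic (hν i) (by linarith)

theorem ae_tendsto_cesaroMean_indicator_Iic {Ω : Type*} [MeasurableSpace Ω] {μ : Measure Ω}
    [IsFiniteMeasure μ] {X : ℕ → Ω → ℝ} {Y : Ω → ℝ} (hindep : Pairwise fun i j => X i ⟂ᵢ[μ] X j)
    (hident : ∀ i, IdentDistrib (X i) Y μ μ) (t : ℝ) :
    ∀ᵐ ω ∂μ, Tendsto (cesaroMean fun i => (Iic t).indicator 1 (X i ω)) atTop
      (𝓝 ((μ.map Y).real (Iic t))) := by
  set φ : ℝ → ℝ := (Iic t).indicator 1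
  have hφ : Measurable φ := measurable_one.indicator measurableSet_Iic
  have hX0 : AEMeasurable (X 0) μ := (hident 0).aemeasurable_fst
  have hint : Integrable (φ ∘ X 0) μ :=
    (integrable_map_measure hφ.aestronglyMeasurable hX0).1
      ((integrable_const 1).indicator measurableSet_Iic)
  have hmean : μ[φ ∘ X 0] = (μ.map Y).real (Iic t) := by
    rw [← (hident 0).map_eq, ← integral_indicator_one measurableSet_Iic]
    exact (integral_map hX0 hφ.aestronglyMeasurable).symm
  have hslln := strong_law_ae_real (fun i => φ ∘ X i) hint
    (fun i j hij => (hindep hij).comp hφ hφ)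
    (fun i => ((hident i).trans (hident 0).symm).comp hφ)
  filter_upwards [hslln] with ω hω
  rw [hmean] at hω
  exact hω.congr fun n => div_eq_inv_mul _ _

theorem stmt_3_general {Ω : Type*} [MeasurableSpace Ω] (μ : Measure Ω) [IsProbabilityMeasure μ]
    (o : ℕ → Ω → ℝ)
    (hindep : iIndepFun o μ)
    (hident : ∀ i, IdentDistrib (o i) (o 0) μ μ)
    (F : ℝ → ℝ) (hF : ∀ x, F x = (μ {ω | o 0 ω ≤ x}).toReal)
    (K : ℕ → ℝ → Measure ℝ) (hKprob : ∀ i r, IsProbabilityMeasure (K i r))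
    (δ : ℕ → ℝ) (hδ : Tendsto δ atTop (𝓝 0))
    (hsupp : ∀ i r, (K i r) (Set.Icc (r - δ i) (r + δ i)) = 1) :
    ∀ᵐ ω ∂μ, ∀ x : ℝ, ContinuousAt F x →
      Tendsto (fun n : ℕ =>
          (1 / (n : ℝ)) * ∑ i ∈ Finset.range n,
            ((K (i + 1) (o (i + 1) ω)) (Set.Iic x)).toReal)
        atTop (𝓝 (F x)) := by
  have hlaw : ∀ t, F t = (μ.map (o 0)).real (Iic t) := fun t => by
    rw [hF, measureReal_def, Measure.map_apply₀ (hident 0).aemeasurable_snd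
      measurableSet_Iic.nullMeasurableSet]
    rfl
  have hemp := ae_all_iff.2 fun q : ℚ =>
    ae_tendsto_cesaroMean_indicator_Iic (X := fun i => o (i + 1))
      (fun i j hij => hindep.indepFun (by simpa using hij)) (fun i => hident (i + 1)) q
  filter_upwards [hemp] with ω hω x hx
  have := fun i => hKprob (i + 1) (o (i + 1) ω)
  simp only [one_div]
  exact tendsto_cesaroMean_measureReal_Iic hx (hδ.comp (tendsto_add_atTop_nat 1))
    (fun i => hsupp (i + 1) _) fun q => by simpa only [hlaw] using hω q

/-- if each kernel K_{o_i} has continuous CDF and is supported in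
[o_i − δ_i, o_i + δ_i] with δ_i → 0, then almost surely the averaged kernel CDFs
converge to F at every continuity point of F. -/
theorem stmt_3 {Ω : Type*} [MeasurableSpace Ω] (μ : Measure Ω) [IsProbabilityMeasure μ]
    (o : ℕ → Ω → ℝ) (homeas : ∀ i, Measurable (o i))
    (hindep : iIndepFun o μ)
    (hident : ∀ i, IdentDistrib (o i) (o 0) μ μ)
    (F : ℝ → ℝ) (hF : ∀ x, F x = (μ {ω | o 0 ω ≤ x}).toReal)
    (K : ℕ → ℝ → Measure ℝ) (hKprob : ∀ i r, IsProbabilityMeasure (K i r))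
    (hKcont : ∀ i r, Continuous (fun x => ((K i r) (Set.Iic x)).toReal))
    (δ : ℕ → ℝ) (hδpos : ∀ i, 0 < δ i) (hδ : Tendsto δ atTop (𝓝 0))
    (hsupp : ∀ i r, (K i r) (Set.Icc (r - δ i) (r + δ i)) = 1) :
    ∀ᵐ ω ∂μ, ∀ x : ℝ, ContinuousAt F x →
      Tendsto (fun n : ℕ =>
          (1 / (n : ℝ)) * ∑ i ∈ Finset.range n,
            ((K (i + 1) (o (i + 1) ω)) (Set.Iic x)).toReal)
        atTop (𝓝 (F x)) :=
  stmt_3_general μ o hindep hident F hF K hKprob δ hδ hsupp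
end

section
/- For every probability measure R on the Borel sets of ℝ^d, there exists a partition family T parametrized by θ ∈ [0,1)^d with countably many measurable bins, and the uniform measure Ψ on [0,1)^d, such that (T, Ψ) is point-isolating over R (any two distinct points of the support of R are separated by a positive-Ψ-measure set of partitions) and bin-supported over R (for every ω ∈ ℝ^d, the set of θ for which the bin of T(θ) containing ω has R-measure zero is a Ψ-null set). -/
open MeasureTheory

def measSupport {d : ℕ} (R : Measure (Fin d → ℝ)) : Set (Fin d → ℝ) :=
  {x | ∀ U : Set (Fin d → ℝ), IsOpen U → x ∈ U → 0 < R U}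

/-!
Each parameter `θ` selects one two-bin partition `{U, Uᶜ}` with `U` from a countable basis,
merged into the trivial partition when one side is `R`-null; so for every `θ`, every nonempty bin
has positive `R`-mass. Two distinct points of the support have disjoint open neighbourhoods, hence
are separated by a basis set `U` both of whose sides have positive mass, and the partition along
`U` is selected on a set of parameters of positive measure: `θ ↦ ⌊θᵢ / (1 - θᵢ)⌋₊` takes each
value `k` on the slab `k / (k + 1) ≤ θᵢ < (k + 1) / (k + 2)` of the unit cube.
-/

open Set Function TopologicalSpace

section PartitionFamily

variable {X Θ ι : Type*} [MeasurableSpace X] [MeasurableSpace Θ]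

def IsMeasurablePartition (P : ι → Set X) : Prop :=
  (∀ n, MeasurableSet (P n)) ∧ Pairwise (Disjoint on P) ∧ ⋃ n, P n = univ

def IsPointIsolating (Ψ : Measure Θ) (T : Θ → ι → Set X) (S : Set X) : Prop :=
  ∀ x ∈ S, ∀ y ∈ S, x ≠ y → 0 < Ψ {θ | ∀ n, x ∈ T θ n → y ∉ T θ n}

def IsBinSupported (Ψ : Measure Θ) (R : Measure X) (T : Θ → ι → Set X) : Prop :=
  ∀ ω, Ψ {θ | ∃ n, ω ∈ T θ n ∧ R (T θ n) = 0} = 0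

end PartitionFamily

section CutBins

variable {X ι : Type*}

/-- The bins `V` (label `a`) and `Vᶜ` (label `b`), written as the fibres of a labelling so that
disjointness and covering are automatic. -/
noncomputable def cutBins (V : Set X) (a b : ι) (n : ι) : Set X :=
  open Classical in
  (fun x => if x ∈ V then a else b) ⁻¹' {n}

lemma cutBins_separates {V : Set X} {a b : ι} (hab : a ≠ b) {x y : X} (hx : x ∈ V) (hy : y ∉ V)
    (n : ι) (hxn : x ∈ cutBins V a b n) : y ∉ cutBins V a b n := by
  simp only [cutBins, mem_preimage, mem_singleton_iff, if_pos hx, if_neg hy] at hxn ⊢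
  exact hxn ▸ hab.symm

end CutBins

section MassCut

variable {X ι : Type*} [MeasurableSpace X] (R : Measure X)

/-- The paper's merging of `R`-null bins: if one side of the cut along `U` is null,
the two bins are merged into `univ`. -/
noncomputable def massCut (U : Set X) : Set X :=
  if R U ≠ 0 ∧ R Uᶜ ≠ 0 then U else univ

variable {R}

lemma massCut_of_ne_zero {U : Set X} (hU : R U ≠ 0) (hUc : R Uᶜ ≠ 0) : massCut R U = U :=
  if_pos ⟨hU, hUc⟩

lemma measurableSet_massCut {U : Set X} (hU : MeasurableSet U) : MeasurableSet (massCut R U) := by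
  unfold massCut
  split_ifs
  exacts [hU, .univ]

lemma measure_massCut_ne_zero [NeZero R] (U : Set X) : R (massCut R U) ≠ 0 := by
  unfold massCut
  split_ifs with h
  exacts [h.1, NeZero.ne _]

lemma measure_compl_massCut_ne_zero {U : Set X} {x : X} (hx : x ∉ massCut R U) :
    R (massCut R U)ᶜ ≠ 0 := by
  unfold massCut at hx ⊢
  split_ifs at hx ⊢ with h
  exacts [h.2, absurd (mem_univ x) hx]

lemma isMeasurablePartition_cutBins {V : Set X} (hV : MeasurableSet V) (a b : ι) :
    IsMeasurablePartition (cutBins V a b) := by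
  refine ⟨fun n => ?_, pairwise_disjoint_fiber _, eq_univ_of_forall fun x => mem_iUnion.2 ⟨_, rfl⟩⟩
  have : cutBins V a b n = V ∩ {_x | a = n} ∪ Vᶜ ∩ {_x | b = n} := by
    ext x
    by_cases hx : x ∈ V <;> simp [cutBins, hx]
  rw [this]
  exact (hV.inter (.const _)).union (hV.compl.inter (.const _))

lemma measure_cutBins_massCut_ne_zero [NeZero R] {U : Set X} {a b n : ι} {ω : X}
    (hω : ω ∈ cutBins (massCut R U) a b n) : R (cutBins (massCut R U) a b n) ≠ 0 := by
  by_cases h : ω ∈ massCut R U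
  · refine fun h0 => measure_massCut_ne_zero U (measure_mono_null (fun x hx => ?_) h0)
    simp_all [cutBins]
  · refine fun h0 => measure_compl_massCut_ne_zero h (measure_mono_null (fun x hx => ?_) h0)
    simp_all [cutBins]

end MassCut

section Separation

variable {X : Type*} [TopologicalSpace X] [MeasurableSpace X] {R : Measure X}

lemma exists_mem_basis_massCut_separating [T2Space X] {B : Set (Set X)}
    (hB : IsTopologicalBasis B) {x y : X} (hx : x ∈ R.support) (hy : y ∈ R.support) (hxy : x ≠ y) :
    ∃ U ∈ B, x ∈ massCut R U ∧ y ∉ massCut R U := by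
  obtain ⟨V, W, hV, hW, hxV, hyW, hVW⟩ := t2_separation hxy
  obtain ⟨U, hUB, hxU, hUV⟩ := hB.exists_subset_of_mem_open hxV hV
  have hRU : R U ≠ 0 :=
    ((R.mem_support_iff_forall x).1 hx U ((hB.isOpen hUB).mem_nhds hxU)).ne'
  have hRUc : R Uᶜ ≠ 0 := fun h0 =>
    ((R.mem_support_iff_forall y).1 hy W (hW.mem_nhds hyW)).ne'
      (measure_mono_null (hVW.mono_left hUV).subset_compl_left h0)
  refine ⟨U, hUB, ?_⟩
  rw [massCut_of_ne_zero hRU hRUc]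
  exact ⟨hxU, fun hyU => hVW.notMem_of_mem_left (hUV hyU) hyW⟩

end Separation

section UnitCube

lemma div_succ_lt_div_succ (k : ℕ) : (k : ℝ) / (k + 1) < (k + 1) / (k + 2) := by
  rw [div_lt_div_iff₀ (by positivity) (by positivity)]
  nlinarith

lemma Ico_div_succ_subset_Ico_zero_one (k : ℕ) :
    Ico ((k : ℝ) / (k + 1)) ((k + 1) / (k + 2)) ⊆ Ico 0 1 :=
  Ico_subset_Ico (by positivity) ((div_le_one (by positivity)).2 (by linarith))

lemma floor_div_one_sub_eq {k : ℕ} {t : ℝ} (ht : t ∈ Ico ((k : ℝ) / (k + 1)) ((k + 1) / (k + 2))) :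
    ⌊t / (1 - t)⌋₊ = k := by
  obtain ⟨h0, h1⟩ := Ico_div_succ_subset_Ico_zero_one k ht
  obtain ⟨hk, hk'⟩ := ht
  rw [div_le_iff₀ (by positivity)] at hk
  rw [lt_div_iff₀ (by positivity)] at hk'
  have hpos : 0 < 1 - t := by linarith
  rw [Nat.floor_eq_iff (div_nonneg h0 hpos.le), le_div_iff₀ hpos, div_lt_iff₀ hpos]
  constructor <;> linarith

variable {d : ℕ}

lemma volume_unitCube_preimage_eval (i : Fin d) {s : Set ℝ} (hs : MeasurableSet s) :
    volume.restrict (univ.pi fun _ : Fin d => Ico (0 : ℝ) 1) (eval i ⁻¹' s) =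
      volume (s ∩ Ico 0 1) := by
  have : IsProbabilityMeasure (volume.restrict (Ico (0 : ℝ) 1)) := ⟨by simp⟩
  rw [volume_pi, Measure.restrict_pi_pi,
    (measurePreserving_eval (fun _ => volume.restrict (Ico (0 : ℝ) 1)) i).measure_preimage
      hs.nullMeasurableSet, Measure.restrict_apply hs]

lemma volume_unitCube_floor_ne_zero (i : Fin d) (k : ℕ) :
    volume.restrict (univ.pi fun _ : Fin d => Ico (0 : ℝ) 1)
      ((fun θ : Fin d → ℝ => ⌊θ i / (1 - θ i)⌋₊) ⁻¹' {k}) ≠ 0 := by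
  set J := Ico ((k : ℝ) / (k + 1)) (((k : ℝ) + 1) / (k + 2))
  have hJ : volume.restrict (univ.pi fun _ : Fin d => Ico (0 : ℝ) 1) (eval i ⁻¹' J) ≠ 0 := by
    rw [volume_unitCube_preimage_eval i measurableSet_Ico,
      inter_eq_left.2 (Ico_div_succ_subset_Ico_zero_one k), Real.volume_Ico]
    simpa using div_succ_lt_div_succ k
  exact fun h0 => hJ (measure_mono_null (fun θ hθ => floor_div_one_sub_eq hθ) h0)

end UnitCube

theorem exists_isPointIsolating_isBinSupported {X Θ ι : Type*} [TopologicalSpace X]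
    [SecondCountableTopology X] [T2Space X] [MeasurableSpace X] [OpensMeasurableSpace X]
    [MeasurableSpace Θ] (R : Measure X) [NeZero R] (Ψ : Measure Θ) (g : Θ → ℕ)
    (hg : ∀ k, Ψ (g ⁻¹' {k}) ≠ 0) {a b : ι} (hab : a ≠ b) :
    ∃ T : Θ → ι → Set X, (∀ θ, IsMeasurablePartition (T θ)) ∧
      IsPointIsolating Ψ T R.support ∧ IsBinSupported Ψ R T := by
  obtain ⟨e, he⟩ := exists_seq_basis X
  refine ⟨fun θ => cutBins (massCut R (e (g θ))) a b, fun θ => isMeasurablePartition_cutBins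
    (measurableSet_massCut (he.isOpen (mem_range_self _)).measurableSet) a b, ?_, ?_⟩
  · intro x hx y hy hxy
    obtain ⟨_, ⟨k, rfl⟩, hxk, hyk⟩ := exists_mem_basis_massCut_separating he hx hy hxy
    refine (hg k).bot_lt.trans_le (measure_mono fun θ (hθ : g θ = k) => ?_)
    simp only [mem_ofPred_eq, hθ]
    exact cutBins_separates hab hxk hyk
  · intro ω
    exact measure_mono_null (fun θ ⟨n, hωn, h0⟩ => measure_cutBins_massCut_ne_zero hωn h0)
      measure_empty

lemma measSupport_eq_support {d : ℕ} (R : Measure (Fin d → ℝ)) : measSupport R = R.support := by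
  rw [Measure.support_eq_forall_isOpen]
  exact Set.ext fun x => forall_congr' fun _ => Imp.swap

/-- for every Borel probability measure R on ℝ^d there is a partition
family T, parametrized by θ ∈ [0,1)^d with countably many measurable bins (indexed by
ℤ^d), such that with Ψ the uniform measure on [0,1)^d, (T, Ψ) is point-isolating and
bin-supported over R. -/
theorem stmt_12 {d : ℕ} (R : Measure (Fin d → ℝ)) [IsProbabilityMeasure R] :
    ∃ T : (Fin d → ℝ) → (Fin d → ℤ) → Set (Fin d → ℝ),
      -- T(θ) is a partition into measurable bins for each parameter θ ∈ [0,1)^d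
      (∀ θ ∈ Set.univ.pi fun _ : Fin d => Set.Ico (0 : ℝ) 1,
        (∀ n, MeasurableSet (T θ n)) ∧
        (∀ n m, n ≠ m → Disjoint (T θ n) (T θ m)) ∧
        (⋃ n, T θ n) = Set.univ) ∧
      -- point-isolating over R
      (∀ ω₁ ∈ measSupport R, ∀ ω₂ ∈ measSupport R, ω₁ ≠ ω₂ →
        0 < (volume.restrict (Set.univ.pi fun _ : Fin d => Set.Ico (0 : ℝ) 1))
              {θ | ∀ n, ω₁ ∈ T θ n → ω₂ ∉ T θ n}) ∧
      -- bin-supported over R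
      (∀ ω : Fin d → ℝ,
        (volume.restrict (Set.univ.pi fun _ : Fin d => Set.Ico (0 : ℝ) 1))
            {θ | ∃ n, ω ∈ T θ n ∧ R (T θ n) = 0} = 0) := by
  rcases isEmpty_or_nonempty (Fin d) with hd | hd
  -- for `d = 0` no selector exists, but then `ℝ^d` is a single point
  · refine ⟨fun _ _ => univ, fun _ _ => ⟨fun _ => .univ,
      fun n m h => (h (Subsingleton.elim n m)).elim, iUnion_const _⟩,
      fun x _ y _ h => (h (Subsingleton.elim x y)).elim, fun _ => ?_⟩
    simp
  · obtain ⟨T, hpart, hiso, hsupp⟩ := exists_isPointIsolating_isBinSupported R _ _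
      (volume_unitCube_floor_ne_zero hd.some) (zero_ne_one : (0 : Fin d → ℤ) ≠ 1)
    rw [measSupport_eq_support]
    exact ⟨T, fun θ _ => hpart θ, hiso, hsupp⟩
end
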